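/- Gradient of the loss with respect to the constraint matrix entry: in the setting of the differentiable QP above, for a loss ℓ(x(θ)) and the adjoint pair (x̃, ξ̃) solving [[C, F^T],[F, 0]] [x̃; ξ̃] = [-∇_x ℓ; 0], the derivative of ℓ with respect to the (i,j) entry of F equals ξ_i x̃_j + ξ̃_i x_j. -/

import Mathlib

/-! Differentiating the KKT system along `θ ↦ F + θ • E` with `E = single i j 1` gives the
linearized system `C x' + Fᵀ ξ' + Eᵀ ξ = 0`, `F x' + E x = 0`. Since the KKT matrix is
symmetric, pairing this with the adjoint system turns `g ⬝ᵥ x'` into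
`x̃ ⬝ᵥ Eᵀ ξ + ξ̃ ⬝ᵥ E x = ξ_i x̃_j + ξ̃_i x_j`, without ever solving for `x'`. -/

open Matrix

section

variable {m n R : Type*} [Fintype m] [Fintype n] [CommRing R]

theorem Matrix.dotProduct_single_mulVec [DecidableEq m] [DecidableEq n]
    (u : m → R) (i : m) (j : n) (c : R) (v : n → R) :
    u ⬝ᵥ (single i j c *ᵥ v) = u i * c * v j := by
  rw [single_mulVec, ← Pi.single, dotProduct_single, mul_assoc]

theorem Matrix.transpose_mulVec_dotProduct (F : Matrix m n R) (u : m → R) (v : n → R) :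
    (Fᵀ *ᵥ u) ⬝ᵥ v = u ⬝ᵥ (F *ᵥ v) := by
  rw [mulVec_transpose, dotProduct_mulVec]

theorem Matrix.IsSymm.mulVec_dotProduct {C : Matrix n n R} (hC : C.IsSymm) (u v : n → R) :
    (C *ᵥ u) ⬝ᵥ v = u ⬝ᵥ (C *ᵥ v) := by
  rw [← hC.eq, transpose_mulVec_dotProduct, hC.eq]

theorem dotProduct_eq_of_adjoint_kkt {C : Matrix n n R} (hC : C.IsSymm) {F : Matrix m n R}
    {g xt dx r : n → R} {ξt dξ s : m → R}
    (hadj1 : C *ᵥ xt + Fᵀ *ᵥ ξt = -g) (hadj2 : F *ᵥ xt = 0)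
    (h1 : C *ᵥ dx + Fᵀ *ᵥ dξ + r = 0) (h2 : F *ᵥ dx + s = 0) :
    g ⬝ᵥ dx = xt ⬝ᵥ r + ξt ⬝ᵥ s := by
  have hCdx : C *ᵥ dx = -(Fᵀ *ᵥ dξ + r) := eq_neg_of_add_eq_zero_left (by rwa [← add_assoc])
  have hFdx : F *ᵥ dx = -s := eq_neg_of_add_eq_zero_left h2
  have hxtF : xt ⬝ᵥ (Fᵀ *ᵥ dξ) = 0 := by
    rw [dotProduct_comm, transpose_mulVec_dotProduct, hadj2, dotProduct_zero]
  calc g ⬝ᵥ dx = -((C *ᵥ xt) ⬝ᵥ dx + (Fᵀ *ᵥ ξt) ⬝ᵥ dx) := by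
        rw [← add_dotProduct, hadj1, neg_dotProduct, neg_neg]
    _ = -(xt ⬝ᵥ (C *ᵥ dx) + ξt ⬝ᵥ (F *ᵥ dx)) := by
        rw [hC.mulVec_dotProduct, transpose_mulVec_dotProduct]
    _ = xt ⬝ᵥ r + ξt ⬝ᵥ s := by
        rw [hCdx, hFdx, dotProduct_neg, dotProduct_add, hxtF, dotProduct_neg]; ring

end

section

variable {𝕜 m n : Type*} [NontriviallyNormedField 𝕜] [Fintype n]
  {v : 𝕜 → n → 𝕜} {v' : n → 𝕜} {t : 𝕜}

theorem HasDerivAt.mulVec (A : Matrix m n 𝕜) (hv : HasDerivAt v v' t) :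
    HasDerivAt (fun θ => A *ᵥ v θ) (A *ᵥ v') t :=
  hasDerivAt_pi.2 fun k =>
    HasDerivAt.fun_sum fun l _ => (hasDerivAt_pi.1 hv l).const_mul (A k l)

theorem HasDerivAt.add_smul_mulVec [Fintype m] (A E : Matrix m n 𝕜) (hv : HasDerivAt v v' t) :
    HasDerivAt (fun θ => (A + θ • E) *ᵥ v θ) ((A + t • E) *ᵥ v' + E *ᵥ v t) t := by
  simp only [add_mulVec, smul_mulVec]
  have hE : HasDerivAt (fun θ => E *ᵥ v θ) (E *ᵥ v') t := hv.mulVec E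
  refine ((hv.mulVec A).fun_add ((hasDerivAt_id' t).fun_smul hE)).congr_deriv ?_
  rw [one_smul, add_assoc]

theorem kkt_linearized_of_hasDerivAt [Fintype m] {C : Matrix n n 𝕜} {F E : Matrix m n 𝕜}
    {b : m → 𝕜} {x : 𝕜 → n → 𝕜} {ξ : 𝕜 → m → 𝕜} {x' : n → 𝕜} {ξ' : m → 𝕜}
    (hx : HasDerivAt x x' t) (hξ : HasDerivAt ξ ξ' t)
    (hkkt : ∀ θ, C *ᵥ x θ + (F + θ • E)ᵀ *ᵥ ξ θ = 0 ∧ (F + θ • E) *ᵥ x θ = b) :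
    C *ᵥ x' + (F + t • E)ᵀ *ᵥ ξ' + Eᵀ *ᵥ ξ t = 0 ∧ (F + t • E) *ᵥ x' + E *ᵥ x t = 0 := by
  have hstat : (fun θ => C *ᵥ x θ + (Fᵀ + θ • Eᵀ) *ᵥ ξ θ) = fun _ => 0 := by
    ext θ : 1; simpa using (hkkt θ).1
  have hprim : (fun θ => (F + θ • E) *ᵥ x θ) = fun _ => b := funext fun θ => (hkkt θ).2
  have hd1 := (hx.mulVec C).fun_add (hξ.add_smul_mulVec Fᵀ Eᵀ)
  have hd2 := hx.add_smul_mulVec F E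
  rw [hstat] at hd1
  rw [hprim] at hd2
  constructor
  · simpa [add_assoc] using ((hasDerivAt_const t 0).unique hd1).symm
  · exact ((hasDerivAt_const t b).unique hd2).symm

end

theorem qp_gradient_wrt_constraint_entry_general {n m : ℕ}
    (C : Matrix (Fin n) (Fin n) ℝ) (F : Matrix (Fin m) (Fin n) ℝ) (b : Fin m → ℝ)
    (hC : C.PosDef)
    (i : Fin m) (j : Fin n)
    (x : ℝ → Fin n → ℝ) (ξ : ℝ → Fin m → ℝ)
    (x' : Fin n → ℝ) (ξ' : Fin m → ℝ)
    (hxd : HasDerivAt x x' 0) (hξd : HasDerivAt ξ ξ' 0)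
    (hkkt : ∀ θ : ℝ,
      C *ᵥ x θ + (F + θ • single i j 1)ᵀ *ᵥ ξ θ = 0 ∧
      (F + θ • single i j 1) *ᵥ x θ = b)
    (ℓ : (Fin n → ℝ) → ℝ) (g : Fin n → ℝ) (l' : (Fin n → ℝ) →L[ℝ] ℝ)
    (hl : HasFDerivAt ℓ l' (x 0)) (hg : ∀ v, l' v = g ⬝ᵥ v)
    (xt : Fin n → ℝ) (ξt : Fin m → ℝ)
    (hadj1 : C *ᵥ xt + Fᵀ *ᵥ ξt = -g) (hadj2 : F *ᵥ xt = 0) :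
    HasDerivAt (fun θ => ℓ (x θ)) (ξ 0 i * xt j + ξt i * x 0 j) 0 := by
  have hsymm : C.IsSymm := isHermitian_iff_isSymm.mp hC.isHermitian
  obtain ⟨hstat, hprim⟩ := kkt_linearized_of_hasDerivAt hxd hξd hkkt
  rw [zero_smul, add_zero] at hstat hprim
  have hgrad : g ⬝ᵥ x' = ξ 0 i * xt j + ξt i * x 0 j := by
    rw [dotProduct_eq_of_adjoint_kkt hsymm hadj1 hadj2 hstat hprim, transpose_single,
      dotProduct_single_mulVec, dotProduct_single_mulVec, mul_one, mul_one, mul_comm (xt j)]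
  rw [← hgrad, ← hg]
  exact hl.comp_hasDerivAt 0 hxd

theorem qp_gradient_wrt_constraint_entry {n m : ℕ}
    (C : Matrix (Fin n) (Fin n) ℝ) (F : Matrix (Fin m) (Fin n) ℝ) (b : Fin m → ℝ)
    (hC : C.PosDef) (hF : Function.Surjective F.mulVec)
    (i : Fin m) (j : Fin n)
    (x : ℝ → Fin n → ℝ) (ξ : ℝ → Fin m → ℝ)
    (x' : Fin n → ℝ) (ξ' : Fin m → ℝ)
    (hxd : HasDerivAt x x' 0) (hξd : HasDerivAt ξ ξ' 0)
    (hkkt : ∀ θ : ℝ,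
      C *ᵥ x θ + (F + θ • single i j 1)ᵀ *ᵥ ξ θ = 0 ∧
      (F + θ • single i j 1) *ᵥ x θ = b)
    (ℓ : (Fin n → ℝ) → ℝ) (g : Fin n → ℝ) (l' : (Fin n → ℝ) →L[ℝ] ℝ)
    (hl : HasFDerivAt ℓ l' (x 0)) (hg : ∀ v, l' v = g ⬝ᵥ v)
    (xt : Fin n → ℝ) (ξt : Fin m → ℝ)
    (hadj1 : C *ᵥ xt + Fᵀ *ᵥ ξt = -g) (hadj2 : F *ᵥ xt = 0) :
    HasDerivAt (fun θ => ℓ (x θ)) (ξ 0 i * xt j + ξt i * x 0 j) 0 :=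
  qp_gradient_wrt_constraint_entry_general C F b hC i j x ξ x' ξ' hxd hξd hkkt ℓ g l' hl hg xt ξt
    hadj1 hadj2
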